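/- Let φ ∈ L_PAPAL and let M = (S, ∼, V) be an epistemic model on which the valuation of the atoms occurring in φ is constant (for every p ∈ v(φ), V(p) = ∅ or V(p) = S). Then M ⊨ φ → □⁺φ, i.e., for every s ∈ S, if M_s ⊨ φ then M_s ⊨ □⁺φ. -/
import Mathlib


/-- An epistemic (S5) model: a nonempty set of states, an equivalence
relation for each agent, and a valuation of atoms. -/
structure EpiModel (A P : Type) where
  S : Type
  ne : Nonempty S
  rel : A → S → S → Prop
  equiv : ∀ a, Equivalence (rel a)
  val : P → Set S

/-- Positive formulas L_EL⁺ : p | ¬p | ∧ | ∨ | K_a. -/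
inductive PosForm (A P : Type) where
  | atom : P → PosForm A P
  | natom : P → PosForm A P
  | and : PosForm A P → PosForm A P → PosForm A P
  | or : PosForm A P → PosForm A P → PosForm A P
  | know : A → PosForm A P → PosForm A P

/-- Satisfaction of a positive formula, relativized to a current domain `D`
(representing the submodel of `M` induced by `D`). -/
def PosForm.sat {A P : Type} (M : EpiModel A P) : PosForm A P → Set M.S → M.S → Prop
  | .atom p, _, s => s ∈ M.val p
  | .natom p, _, s => s ∉ M.val p
  | .and φ ψ, D, s => PosForm.sat M φ D s ∧ PosForm.sat M ψ D s
  | .or φ ψ, D, s => PosForm.sat M φ D s ∨ PosForm.sat M ψ D s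
  | .know a φ, D, s => ∀ t, M.rel a s t → t ∈ D → PosForm.sat M φ D t

/-- The language L_PAPAL : atoms, ¬, ∧, K_a, announcements [ψ]φ and the
positive arbitrary-announcement quantifier □⁺. -/
inductive Form (A P : Type) where
  | atom : P → Form A P
  | neg : Form A P → Form A P
  | and : Form A P → Form A P → Form A P
  | know : A → Form A P → Form A P
  | ann : Form A P → Form A P → Form A P
  | pbox : Form A P → Form A P

/-- Satisfaction, relativized to a current domain `D`: `Form.sat M φ D s`
means that φ holds at state `s` of the restriction of `M` to `D`.
Announcement `[ψ]φ` further restricts the domain to the states of `D`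
satisfying ψ; `□⁺φ` quantifies over announcements of positive formulas. -/
def Form.sat {A P : Type} (M : EpiModel A P) : Form A P → Set M.S → M.S → Prop
  | .atom p, _, s => s ∈ M.val p
  | .neg φ, D, s => ¬ Form.sat M φ D s
  | .and φ ψ, D, s => Form.sat M φ D s ∧ Form.sat M ψ D s
  | .know a φ, D, s => ∀ t, M.rel a s t → t ∈ D → Form.sat M φ D t
  | .ann ψ φ, D, s => Form.sat M ψ D s → Form.sat M φ {t | t ∈ D ∧ Form.sat M ψ D t} s
  | .pbox φ, D, s => ∀ χ : PosForm A P, PosForm.sat M χ D s →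
      Form.sat M φ {t | t ∈ D ∧ PosForm.sat M χ D t} s

/-- Truth at a pointed model `M_s`. -/
def Sat {A P : Type} (M : EpiModel A P) (s : M.S) (φ : Form A P) : Prop :=
  Form.sat M φ Set.univ s

def Form.or {A P : Type} (φ ψ : Form A P) : Form A P := .neg (.and (.neg φ) (.neg ψ))
def Form.imp {A P : Type} (φ ψ : Form A P) : Form A P := Form.or (.neg φ) ψ
def Form.iff {A P : Type} (φ ψ : Form A P) : Form A P := .and (Form.imp φ ψ) (Form.imp ψ φ)
def Form.pdia {A P : Type} (φ : Form A P) : Form A P := .neg (.pbox (.neg φ))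
def Form.lknow {A P : Type} (a : A) (φ : Form A P) : Form A P := .neg (.know a (.neg φ))

/-- Validity on the class S5 of all epistemic models. -/
def Valid (A P : Type) (φ : Form A P) : Prop :=
  ∀ (M : EpiModel A P) (s : M.S), Sat M s φ

/-- The set of propositional atoms occurring in a formula. -/
def Form.vars {A P : Type} : Form A P → Set P
  | .atom p => {p}
  | .neg φ => Form.vars φ
  | .and φ ψ => Form.vars φ ∪ Form.vars ψ
  | .know _ φ => Form.vars φ
  | .ann φ ψ => Form.vars φ ∪ Form.vars ψ
  | .pbox φ => Form.vars φ



def PosForm.firstAtom {A P : Type} : PosForm A P → P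
  | .atom p => p
  | .natom p => p
  | .and φ _ => φ.firstAtom
  | .or φ _ => φ.firstAtom
  | .know _ φ => φ.firstAtom

theorem sat_const_aux {A P : Type} (M : EpiModel A P) (φ : Form A P)
    (hconst : ∀ p ∈ Form.vars φ, M.val p = ∅ ∨ M.val p = Set.univ) :
    ∀ D D' : Set M.S, ∀ s s' : M.S, s ∈ D → s' ∈ D' →
      (Form.sat M φ D s ↔ Form.sat M φ D' s') := by
  induction φ with
  | atom p =>
    intro D D' s s' _ _
    rcases hconst p rfl with h | h <;> simp [Form.sat, h]
  | neg φ ih =>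
    intro D D' s s' hs hs'
    simp only [Form.sat]
    exact not_congr (ih hconst D D' s s' hs hs')
  | and φ ψ ihφ ihψ =>
    intro D D' s s' hs hs'
    have h1 : ∀ p ∈ Form.vars φ, M.val p = ∅ ∨ M.val p = Set.univ :=
      fun p hp => hconst p (Or.inl hp)
    have h2 : ∀ p ∈ Form.vars ψ, M.val p = ∅ ∨ M.val p = Set.univ :=
      fun p hp => hconst p (Or.inr hp)
    simp only [Form.sat]
    exact and_congr (ihφ h1 D D' s s' hs hs') (ihψ h2 D D' s s' hs hs')
  | know a φ ih =>
    intro D D' s s' hs hs'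
    simp only [Form.sat]
    constructor
    · intro h t ht htD'
      have hφ : Form.sat M φ D s := h s ((M.equiv a).refl s) hs
      exact (ih hconst D D' s t hs htD').mp hφ
    · intro h t ht htD
      have hφ : Form.sat M φ D' s' := h s' ((M.equiv a).refl s') hs'
      exact (ih hconst D' D s' t hs' htD).mp hφ
  | ann ψ φ ihψ ihφ =>
    intro D D' s s' hs hs'
    have h1 : ∀ p ∈ Form.vars ψ, M.val p = ∅ ∨ M.val p = Set.univ :=
      fun p hp => hconst p (Or.inl hp)
    have h2 : ∀ p ∈ Form.vars φ, M.val p = ∅ ∨ M.val p = Set.univ :=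
      fun p hp => hconst p (Or.inr hp)
    simp only [Form.sat]
    constructor
    · intro h hψ'
      have hψ : Form.sat M ψ D s := (ihψ h1 D' D s' s hs' hs).mp hψ'
      exact (ihφ h2 {t | t ∈ D ∧ Form.sat M ψ D t} {t | t ∈ D' ∧ Form.sat M ψ D' t} s s' ⟨hs, hψ⟩ ⟨hs', hψ'⟩).mp (h hψ)
    · intro h hψ
      have hψ' : Form.sat M ψ D' s' := (ihψ h1 D D' s s' hs hs').mp hψ
      exact (ihφ h2 {t | t ∈ D' ∧ Form.sat M ψ D' t} {t | t ∈ D ∧ Form.sat M ψ D t} s' s ⟨hs', hψ'⟩ ⟨hs, hψ⟩).mp (h hψ')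
  | pbox φ ih =>
    intro D D' s s' hs hs'
    simp only [Form.sat]
    constructor
    · intro h χ hχ
      set p := χ.firstAtom
      have h0 : PosForm.sat M (.or (.atom p) (.natom p)) D s := by
        simp only [PosForm.sat]; exact em _
      have := h (.or (.atom p) (.natom p)) h0
      exact (ih hconst {t | t ∈ D ∧ PosForm.sat M (.or (.atom p) (.natom p)) D t} {t | t ∈ D' ∧ PosForm.sat M χ D' t} s s' ⟨hs, h0⟩ ⟨hs', hχ⟩).mp this
    · intro h χ hχ
      set p := χ.firstAtom
      have h0 : PosForm.sat M (.or (.atom p) (.natom p)) D' s' := by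
        simp only [PosForm.sat]; exact em _
      have := h (.or (.atom p) (.natom p)) h0
      exact (ih hconst {t | t ∈ D' ∧ PosForm.sat M (.or (.atom p) (.natom p)) D' t} {t | t ∈ D ∧ PosForm.sat M χ D t} s' s ⟨hs', h0⟩ ⟨hs, hχ⟩).mp this

/-- If the valuation of every atom occurring in φ is constant
on `M`, then `M ⊨ φ → □⁺φ`: for every state `s`, if `M_s ⊨ φ` then
`M_s ⊨ □⁺φ`. -/
theorem constant_valuation_pbox
    (A P : Type) (φ : Form A P) (M : EpiModel A P)
    (hconst : ∀ p ∈ Form.vars φ, M.val p = ∅ ∨ M.val p = Set.univ) :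
    ∀ s : M.S, Sat M s φ → Sat M s (.pbox φ) := by
  intro s hs χ hχ
  exact (sat_const_aux M φ hconst Set.univ {t | t ∈ Set.univ ∧ PosForm.sat M χ Set.univ t} s s trivial ⟨trivial, hχ⟩).mp hs
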